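/- Let σ ≥ 0, β ∈ ℝ, and let s* be a global minimizer of M(s) = f0 + gᵀs + (1/2)sᵀHs + (β/6)‖s‖³ + (σ/4)‖s‖⁴ with β + 3σ‖s*‖ ≥ 0. Then for every s ∈ ℝⁿ, M(s) - M(s*) = (1/2)(s - s*)ᵀ B(s*) (s - s*) + F₂(s), where B(s*) = H + (β/2)‖s*‖I + σ‖s*‖²I ⪰ 0 and F₂(s) = (1/2)(‖s‖-‖s*‖)²[((β+3σ‖s*‖)/6)(‖s*‖+2‖s‖) + (σ/2)‖s‖²] ≥ 0. -/

import Mathlib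

open Matrix Polynomial

noncomputable def enorm' {n : ℕ} (s : Fin n → ℝ) : ℝ := Real.sqrt (s ⬝ᵥ s)

noncomputable def Mfun {n : ℕ} (f0 : ℝ) (g : Fin n → ℝ)
    (H : Matrix (Fin n) (Fin n) ℝ) (β σ : ℝ) (s : Fin n → ℝ) : ℝ :=
  f0 + g ⬝ᵥ s + (1/2) * (s ⬝ᵥ (H *ᵥ s)) + (β/6) * enorm' s ^ 3 + (σ/4) * enorm' s ^ 4

noncomputable def Bmat {n : ℕ} (H : Matrix (Fin n) (Fin n) ℝ) (β σ : ℝ)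
    (s : Fin n → ℝ) : Matrix (Fin n) (Fin n) ℝ :=
  H + ((β/2) * enorm' s) • (1 : Matrix (Fin n) (Fin n) ℝ)
    + (σ * enorm' s ^ 2) • (1 : Matrix (Fin n) (Fin n) ℝ)

/-!
Expanding `M` around `s*` gives, for every `s`,
`M(s) - M(s*) = (g + B(s*) s*)ᵀ (s - s*) + ½ (s - s*)ᵀ B(s*) (s - s*) + F₂(s)`,
where `F₂` depends only on `r = ‖s*‖` and `ρ = ‖s‖`, is nonnegative once `β + 3σr ≥ 0`, and is at
most `(β + 3σr)/6 · |ρ - r| · |ρ² - r²| + σ/4 · (ρ² - r²)²`. Along `s = s* + t d` this is `O(t²)`,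
so minimality forces the gradient `g + B(s*) s*` to vanish. Then `dᵀ B(s*) d ≥ 0`: if `s*ᵀ d ≠ 0`,
a multiple of `d` carries `s*` to another point of the sphere of radius `r`, where `F₂ = 0`; if
`s*ᵀ d = 0`, then `ρ² - r² = t² ‖d‖²`, so `F₂(s* + t d) = O(t³)` and one lets `t → 0`.
-/

open Filter Topology

lemma nonneg_of_forall_nonneg_add_mul {a b : ℝ}
    (h : ∀ t : ℝ, 0 < t → t ≤ 1 → 0 ≤ a + t * b) : 0 ≤ a := by
  have hlim : Tendsto (fun t : ℝ => a + t * b) (𝓝[>] 0) (𝓝 a) := by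
    simpa using ((by fun_prop : Continuous fun t : ℝ => a + t * b).tendsto 0).mono_left
      nhdsWithin_le_nhds
  exact ge_of_tendsto hlim (eventually_of_mem (Ioc_mem_nhdsGT one_pos) fun t ht => h t ht.1 ht.2)

section EuclideanNorm

variable {n : ℕ}

lemma enorm'_eq_norm (s : Fin n → ℝ) : enorm' s = ‖WithLp.toLp 2 s‖ := by
  simp [EuclideanSpace.norm_eq, enorm', dotProduct, sq]

lemma enorm'_nonneg (s : Fin n → ℝ) : 0 ≤ enorm' s := Real.sqrt_nonneg _

lemma enorm'_sq (s : Fin n → ℝ) : enorm' s ^ 2 = s ⬝ᵥ s :=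
  Real.sq_sqrt (Finset.sum_nonneg fun i _ => mul_self_nonneg (s i))

lemma enorm'_add_smul_sq (s d : Fin n → ℝ) (t : ℝ) :
    enorm' (s + t • d) ^ 2 = enorm' s ^ 2 + 2 * t * (s ⬝ᵥ d) + t ^ 2 * enorm' d ^ 2 := by
  simp only [enorm'_sq, dotProduct_add, add_dotProduct, dotProduct_smul, smul_dotProduct,
    smul_eq_mul, dotProduct_comm d s]
  ring

lemma abs_enorm'_add_smul_sub_le (s d : Fin n → ℝ) {t : ℝ} (ht : 0 ≤ t) :
    |enorm' (s + t • d) - enorm' s| ≤ t * enorm' d := by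
  simpa [enorm'_eq_norm, norm_smul, abs_of_nonneg ht] using
    abs_norm_sub_norm_le (WithLp.toLp 2 (s + t • d)) (WithLp.toLp 2 s)

lemma abs_enorm'_add_smul_sq_sub_le (s d : Fin n → ℝ) {t : ℝ} (ht0 : 0 ≤ t) (ht1 : t ≤ 1) :
    |enorm' (s + t • d) ^ 2 - enorm' s ^ 2| ≤ t * (2 * |s ⬝ᵥ d| + enorm' d ^ 2) := by
  rw [enorm'_add_smul_sq, add_assoc, add_sub_cancel_left]
  calc |2 * t * (s ⬝ᵥ d) + t ^ 2 * enorm' d ^ 2|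
      ≤ 2 * t * |s ⬝ᵥ d| + t ^ 2 * enorm' d ^ 2 := by
        refine (abs_add_le _ _).trans_eq ?_
        rw [abs_mul, abs_of_nonneg (by positivity : 0 ≤ 2 * t),
          abs_of_nonneg (by positivity : 0 ≤ t ^ 2 * enorm' d ^ 2)]
    _ ≤ t * (2 * |s ⬝ᵥ d| + enorm' d ^ 2) := by
        have : t ^ 2 * enorm' d ^ 2 ≤ t * enorm' d ^ 2 := by
          gcongr
          nlinarith
        linarith

end EuclideanNorm

/-- The term `F₂` of the statement, as a function of `r = ‖s*‖` and `ρ = ‖s‖`. -/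
noncomputable def normRemainder (β σ r ρ : ℝ) : ℝ :=
  (1/2) * (ρ - r) ^ 2 * (((β + 3 * σ * r) / 6) * (r + 2 * ρ) + (σ / 2) * ρ ^ 2)

section NormRemainder

variable {β σ r ρ : ℝ}

lemma normRemainder_self : normRemainder β σ r r = 0 := by
  simp [normRemainder]

lemma normRemainder_nonneg (hσ : 0 ≤ σ) (hr : 0 ≤ r) (hρ : 0 ≤ ρ)
    (hβ : 0 ≤ β + 3 * σ * r) : 0 ≤ normRemainder β σ r ρ := by
  unfold normRemainder
  have : 0 ≤ (β + 3 * σ * r) / 6 := by positivity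
  positivity

lemma normRemainder_le (hσ : 0 ≤ σ) (hr : 0 ≤ r) (hρ : 0 ≤ ρ)
    (hβ : 0 ≤ β + 3 * σ * r) {δ ε : ℝ} (hδ : |ρ - r| ≤ δ) (hε : |ρ ^ 2 - r ^ 2| ≤ ε) :
    normRemainder β σ r ρ ≤ (β + 3 * σ * r) / 6 * δ * ε + σ / 4 * ε ^ 2 := by
  have hc : 0 ≤ (β + 3 * σ * r) / 6 := by positivity
  have hsq : |ρ ^ 2 - r ^ 2| = |ρ - r| * (ρ + r) := by
    rw [sq_sub_sq, abs_mul, abs_of_nonneg (add_nonneg hρ hr), mul_comm]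
  have hδ0 : 0 ≤ δ := (abs_nonneg _).trans hδ
  calc normRemainder β σ r ρ
      ≤ (β + 3 * σ * r) / 6 * |ρ - r| * |ρ ^ 2 - r ^ 2| + σ / 4 * |ρ ^ 2 - r ^ 2| ^ 2 := by
        rw [hsq, mul_pow, sq_abs, mul_assoc _ |ρ - r|, ← mul_assoc |ρ - r|, abs_mul_abs_self,
          normRemainder]
        have : 0 ≤ (ρ - r) ^ 2 * (r * ((β + 3 * σ * r) / 12 + σ / 4 * (2 * ρ + r))) := by
          positivity
        linarith
    _ ≤ (β + 3 * σ * r) / 6 * δ * ε + σ / 4 * ε ^ 2 := by gcongr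

end NormRemainder

lemma Mfun_add_sub_eq {n : ℕ} (f0 : ℝ) (g : Fin n → ℝ) {H : Matrix (Fin n) (Fin n) ℝ}
    (hH : H.IsSymm) (β σ : ℝ) (s d : Fin n → ℝ) :
    Mfun f0 g H β σ (s + d) - Mfun f0 g H β σ s =
      (g + Bmat H β σ s *ᵥ s) ⬝ᵥ d + (1/2) * (d ⬝ᵥ (Bmat H β σ s *ᵥ d))
        + normRemainder β σ (enorm' s) (enorm' (s + d)) := by
  have hsym : s ⬝ᵥ (H *ᵥ d) = d ⬝ᵥ (H *ᵥ s) := by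
    rw [dotProduct_mulVec, ← mulVec_transpose, hH.eq, dotProduct_comm]
  have hρ : enorm' (s + d) ^ 2 = enorm' s ^ 2 + 2 * (s ⬝ᵥ d) + d ⬝ᵥ d := by
    simpa [enorm'_sq d] using enorm'_add_smul_sq s d 1
  simp only [Mfun, Bmat, normRemainder, add_mulVec, smul_mulVec, one_mulVec, mulVec_add,
    dotProduct_add, add_dotProduct, dotProduct_smul, smul_dotProduct, smul_eq_mul, hsym,
    dotProduct_comm (H *ᵥ s) d]
  linear_combination (enorm' s * (β / 4 + σ / 2 * enorm' s)) * hρ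

section Optimality

variable {n : ℕ} {β σ : ℝ} {s : Fin n → ℝ} {B : Matrix (Fin n) (Fin n) ℝ}

lemma eq_zero_of_forall_nonneg_dotProduct_add_normRemainder (hσ : 0 ≤ σ)
    (hβ : 0 ≤ β + 3 * σ * enorm' s) {w : Fin n → ℝ}
    (h : ∀ d, 0 ≤ w ⬝ᵥ d + (1/2) * (d ⬝ᵥ (B *ᵥ d))
      + normRemainder β σ (enorm' s) (enorm' (s + d))) :
    w = 0 := by
  have hdir : ∀ d, 0 ≤ w ⬝ᵥ d := by
    intro d
    set c := (β + 3 * σ * enorm' s) / 6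
    set m := 2 * |s ⬝ᵥ d| + enorm' d ^ 2
    apply nonneg_of_forall_nonneg_add_mul
      (b := (1/2) * (d ⬝ᵥ (B *ᵥ d)) + (c * enorm' d * m + σ / 4 * m ^ 2))
    intro t ht0 ht1
    have hR : normRemainder β σ (enorm' s) (enorm' (s + t • d))
        ≤ t ^ 2 * (c * enorm' d * m + σ / 4 * m ^ 2) :=
      calc _ ≤ c * (t * enorm' d) * (t * m) + σ / 4 * (t * m) ^ 2 :=
            normRemainder_le hσ (enorm'_nonneg _) (enorm'_nonneg _) hβ
              (abs_enorm'_add_smul_sub_le s d ht0.le) (abs_enorm'_add_smul_sq_sub_le s d ht0.le ht1)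
        _ = _ := by ring
    have hd := h (t • d)
    rw [mulVec_smul, dotProduct_smul, dotProduct_smul, smul_dotProduct, smul_eq_mul,
      smul_eq_mul, smul_eq_mul] at hd
    refine nonneg_of_mul_nonneg_right ?_ ht0
    nlinarith
  have hneg := hdir (-w)
  rw [dotProduct_neg] at hneg
  exact dotProduct_self_eq_zero.1 (le_antisymm (by linarith) (hdir w))

lemma dotProduct_mulVec_nonneg_of_dotProduct_ne_zero
    (hB : ∀ d, 0 ≤ (1/2) * (d ⬝ᵥ (B *ᵥ d)) + normRemainder β σ (enorm' s) (enorm' (s + d)))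
    {d : Fin n → ℝ} (hsd : s ⬝ᵥ d ≠ 0) :
    0 ≤ d ⬝ᵥ (B *ᵥ d) := by
  have hd0 : d ≠ 0 := by
    rintro rfl
    simp at hsd
  have hdpos : 0 < enorm' d ^ 2 := by
    rw [enorm'_eq_norm]
    exact pow_pos (norm_pos_iff.2 (by simpa using hd0)) 2
  set t := -2 * (s ⬝ᵥ d) / enorm' d ^ 2
  have ht : t ≠ 0 := div_ne_zero (by simpa using hsd) hdpos.ne'
  have hnorm : enorm' (s + t • d) = enorm' s := by
    rw [← sq_eq_sq₀ (enorm'_nonneg _) (enorm'_nonneg _), enorm'_add_smul_sq]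
    simp only [t]
    field_simp
    ring
  have hd := hB (t • d)
  rw [hnorm, normRemainder_self, mulVec_smul, dotProduct_smul, smul_dotProduct, smul_eq_mul,
    smul_eq_mul] at hd
  exact nonneg_of_mul_nonneg_right (a := t ^ 2) (by linarith) (sq_pos_of_ne_zero ht)

lemma dotProduct_mulVec_nonneg_of_dotProduct_eq_zero (hσ : 0 ≤ σ)
    (hβ : 0 ≤ β + 3 * σ * enorm' s)
    (hB : ∀ d, 0 ≤ (1/2) * (d ⬝ᵥ (B *ᵥ d)) + normRemainder β σ (enorm' s) (enorm' (s + d)))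
    {d : Fin n → ℝ} (hsd : s ⬝ᵥ d = 0) :
    0 ≤ d ⬝ᵥ (B *ᵥ d) := by
  set c := (β + 3 * σ * enorm' s) / 6
  have hc : 0 ≤ c := by positivity
  apply nonneg_of_forall_nonneg_add_mul (b := 2 * (c * enorm' d ^ 3 + σ / 4 * enorm' d ^ 4))
  intro t ht0 ht1
  have hε : |enorm' (s + t • d) ^ 2 - enorm' s ^ 2| ≤ t ^ 2 * enorm' d ^ 2 := by
    rw [enorm'_add_smul_sq, hsd, mul_zero, add_zero, add_sub_cancel_left,
      abs_of_nonneg (by positivity)]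
  have hR : normRemainder β σ (enorm' s) (enorm' (s + t • d))
      ≤ t ^ 3 * (c * enorm' d ^ 3 + σ / 4 * enorm' d ^ 4) :=
    calc _ ≤ c * (t * enorm' d) * (t ^ 2 * enorm' d ^ 2) + σ / 4 * (t ^ 2 * enorm' d ^ 2) ^ 2 :=
          normRemainder_le hσ (enorm'_nonneg _) (enorm'_nonneg _) hβ
            (abs_enorm'_add_smul_sub_le s d ht0.le) hε
      _ = t ^ 3 * (c * enorm' d ^ 3 + t * (σ / 4 * enorm' d ^ 4)) := by ring
      _ ≤ _ := by
          gcongr _ * ?_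
          linarith [mul_le_of_le_one_left (b := σ / 4 * enorm' d ^ 4) (by positivity) ht1]
  have hd := hB (t • d)
  rw [mulVec_smul, dotProduct_smul, smul_dotProduct, smul_eq_mul, smul_eq_mul] at hd
  refine nonneg_of_mul_nonneg_right (a := t ^ 2 / 2) ?_ (by positivity)
  nlinarith

lemma posSemidef_of_forall_nonneg_add_normRemainder (hσ : 0 ≤ σ)
    (hβ : 0 ≤ β + 3 * σ * enorm' s) (hsymm : B.IsSymm)
    (hB : ∀ d, 0 ≤ (1/2) * (d ⬝ᵥ (B *ᵥ d)) + normRemainder β σ (enorm' s) (enorm' (s + d))) :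
    B.PosSemidef := by
  refine posSemidef_iff_dotProduct_mulVec.2 ⟨isHermitian_iff_isSymm.2 hsymm, fun d => ?_⟩
  rw [star_trivial]
  by_cases hsd : s ⬝ᵥ d = 0
  · exact dotProduct_mulVec_nonneg_of_dotProduct_eq_zero hσ hβ hB hsd
  · exact dotProduct_mulVec_nonneg_of_dotProduct_ne_zero hB hsd

end Optimality

lemma Bmat_isSymm {n : ℕ} {H : Matrix (Fin n) (Fin n) ℝ} (hH : H.IsSymm) (β σ : ℝ)
    (s : Fin n → ℝ) : (Bmat H β σ s).IsSymm :=
  (hH.add (isSymm_one.smul _)).add (isSymm_one.smul _)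

theorem stmt5 {n : ℕ} (f0 : ℝ) (g : Fin n → ℝ) (H : Matrix (Fin n) (Fin n) ℝ)
    (hH : H.IsSymm) (β σ : ℝ) (hσ : 0 ≤ σ) (sstar : Fin n → ℝ)
    (hmin : ∀ s : Fin n → ℝ, Mfun f0 g H β σ sstar ≤ Mfun f0 g H β σ s)
    (hβ : 0 ≤ β + 3 * σ * enorm' sstar) :
    (Bmat H β σ sstar).PosSemidef ∧
    ∀ s : Fin n → ℝ,
      Mfun f0 g H β σ s - Mfun f0 g H β σ sstar =
        (1/2) * ((s - sstar) ⬝ᵥ ((Bmat H β σ sstar) *ᵥ (s - sstar)))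
          + (1/2) * (enorm' s - enorm' sstar)^2 *
              (((β + 3 * σ * enorm' sstar)/6) * (enorm' sstar + 2 * enorm' s)
                + (σ/2) * enorm' s ^ 2)
      ∧ 0 ≤ (1/2) * (enorm' s - enorm' sstar)^2 *
              (((β + 3 * σ * enorm' sstar)/6) * (enorm' sstar + 2 * enorm' s)
                + (σ/2) * enorm' s ^ 2) := by
  have hexp := Mfun_add_sub_eq f0 g hH β σ sstar
  have hgrad : g + Bmat H β σ sstar *ᵥ sstar = 0 :=
    eq_zero_of_forall_nonneg_dotProduct_add_normRemainder hσ hβ fun d => by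
      rw [← hexp]
      exact sub_nonneg.2 (hmin _)
  simp only [hgrad, zero_dotProduct, zero_add] at hexp
  refine ⟨posSemidef_of_forall_nonneg_add_normRemainder hσ hβ (Bmat_isSymm hH β σ sstar)
    fun d => ?_, fun s => ⟨?_, normRemainder_nonneg hσ (enorm'_nonneg _) (enorm'_nonneg _) hβ⟩⟩
  · rw [← hexp]
    exact sub_nonneg.2 (hmin _)
  · simpa only [add_sub_cancel, normRemainder] using hexp (s - sstar)
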